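/- Let I_n(s) := E(s^{Y_n} N_n) and G_n(s) := E(s^{Y_n}) where (Y_n, N_n) satisfies the joint recursion (Y_{n+1}, N_{n+1}) = (Σ_Y − 1, Σ_N)·1_{Σ_Y ≥ 1} built from m i.i.d. copies of (Y_n, N_n). Then I_{n+1}(s) = (m/s)·I_n(s)·G_n(s)^{m−1} − (m/s)·I_n(0)·G_n(0)^{m−1} for all s > 0 where these quantities are finite, where I_n(0) := E(N_n 1_{Y_n = 0}) and G_n(0) := P(Y_n = 0). -/

import Mathlib

/-!
In `ℝ≥0∞` every series converges and can be rearranged freely, so work there. The sum of `k`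
i.i.d. copies has `E c^Σ_Y = G(c)^k` and, by the product rule, `E(c^Σ_Y Σ_N) = k I(c) G(c)^(k-1)`.
The step `Σ_Y ↦ Σ_Y - 1` divides `c^Σ_Y` by `c`, except on `{Σ_Y = 0}`, which is sent to `(0, 0)`;
evaluating at `c = 0` isolates exactly that event, so `c I'(c) + E(Σ_N; Σ_Y = 0) = E(c^Σ_Y Σ_N)`.
The summability hypotheses make all terms finite, and the identity passes to the real numbers.
-/

open scoped ENNReal

/-- Law of the componentwise sum of `n` i.i.d. copies of a pair-valued `PMF`. -/
noncomputable def sumIID2 (p : PMF (ℕ × ℕ)) : ℕ → PMF (ℕ × ℕ)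
  | 0 => PMF.pure (0, 0)
  | (k+1) => (sumIID2 p k).bind (fun s => p.map (fun a => (a.1 + s.1, a.2 + s.2)))

/-- One step of the joint recursion:
`(Y', N') = (Σ_Y − 1, Σ_N)` if `Σ_Y ≥ 1` and `(0, 0)` if `Σ_Y = 0`. -/
noncomputable def jointStep (m : ℕ) (p : PMF (ℕ × ℕ)) : PMF (ℕ × ℕ) :=
  (sumIID2 p m).map (fun z => if z.1 = 0 then (0, 0) else (z.1 - 1, z.2))

namespace PMF

variable {α β : Type*}

theorem tsum_map_mul (p : PMF α) (h : α → β) (g : β → ℝ≥0∞) :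
    ∑' b, p.map h b * g b = ∑' a, p a * g (h a) := by
  simp only [map_apply, ← ENNReal.tsum_mul_right, ite_mul, zero_mul]
  rw [ENNReal.tsum_comm]
  refine tsum_congr fun a => ?_
  rw [tsum_eq_single (h a) fun b hb => by simp [hb]]
  simp

theorem tsum_bind_mul (p : PMF α) (f : α → PMF β) (g : β → ℝ≥0∞) :
    ∑' b, p.bind f b * g b = ∑' a, p a * ∑' b, f a b * g b := by
  simp only [bind_apply, ← ENNReal.tsum_mul_right, ← ENNReal.tsum_mul_left, mul_assoc]
  exact ENNReal.tsum_comm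

end PMF

theorem ENNReal.tsum_ne_top_of_summable_toReal {α : Type*} {f : α → ℝ≥0∞}
    (hf : ∀ a, f a ≠ ∞) (h : Summable fun a => (f a).toReal) : ∑' a, f a ≠ ∞ := by
  have hf' : f = fun a => ENNReal.ofReal (f a).toReal :=
    funext fun a => (ofReal_toReal (hf a)).symm
  rw [hf', ← ofReal_tsum_of_nonneg (fun _ => toReal_nonneg) h]
  exact ofReal_ne_top

section GeneratingFunctions

/-- For `(Y, N) ∼ p`, `pgf p c = E c^Y` is the paper's `G` and `pgfMulSnd p c = E (c^Y N)` its `I`;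
at `c = 0` they are `P(Y = 0)` and `E(N; Y = 0)`, since `0 ^ 0 = 1`. -/
noncomputable def pgf (p : PMF (ℕ × ℕ)) (c : ℝ≥0∞) : ℝ≥0∞ :=
  ∑' w : ℕ × ℕ, p w * c ^ w.1

noncomputable def pgfMulSnd (p : PMF (ℕ × ℕ)) (c : ℝ≥0∞) : ℝ≥0∞ :=
  ∑' w : ℕ × ℕ, p w * c ^ w.1 * w.2

variable (p : PMF (ℕ × ℕ)) (c : ℝ≥0∞)

theorem tsum_sumIID2_succ_mul (k : ℕ) (f : ℕ × ℕ → ℝ≥0∞) :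
    ∑' w, sumIID2 p (k + 1) w * f w
      = ∑' t, sumIID2 p k t * ∑' a, p a * f (a.1 + t.1, a.2 + t.2) := by
  simp only [sumIID2, PMF.tsum_bind_mul, PMF.tsum_map_mul]

theorem pgf_sumIID2 (k : ℕ) : pgf (sumIID2 p k) c = pgf p c ^ k := by
  induction k with
  | zero =>
    rw [pgf, tsum_eq_single (0, 0) fun w hw => by simp [sumIID2, hw]]
    simp [sumIID2]
  | succ k ih =>
    have hinner : ∀ t : ℕ × ℕ, ∑' a, p a * c ^ (a.1 + t.1) = pgf p c * c ^ t.1 := fun t => by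
      simp only [pgf, pow_add, ← mul_assoc, ENNReal.tsum_mul_right]
    rw [pgf, tsum_sumIID2_succ_mul]
    simp only [hinner, mul_left_comm _ (pgf p c), ENNReal.tsum_mul_left]
    rw [← pgf, ih, pow_succ']

theorem pgfMulSnd_sumIID2_succ (k : ℕ) :
    pgfMulSnd (sumIID2 p (k + 1)) c
      = pgfMulSnd p c * pgf p c ^ k + pgf p c * pgfMulSnd (sumIID2 p k) c := by
  have hinner : ∀ t : ℕ × ℕ, ∑' a, p a * (c ^ (a.1 + t.1) * ((a.2 + t.2 : ℕ) : ℝ≥0∞))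
      = pgfMulSnd p c * c ^ t.1 + pgf p c * (c ^ t.1 * t.2) := fun t => by
    have hterm : ∀ a : ℕ × ℕ, p a * (c ^ (a.1 + t.1) * ((a.2 + t.2 : ℕ) : ℝ≥0∞))
        = p a * c ^ a.1 * a.2 * c ^ t.1 + p a * c ^ a.1 * (c ^ t.1 * t.2) := fun a => by
      push_cast; ring
    simp only [hterm, ENNReal.tsum_add, ENNReal.tsum_mul_right, pgf, pgfMulSnd]
  have hsplit : ∀ t : ℕ × ℕ,
      sumIID2 p k t * (pgfMulSnd p c * c ^ t.1 + pgf p c * (c ^ t.1 * t.2))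
        = pgfMulSnd p c * (sumIID2 p k t * c ^ t.1)
          + pgf p c * (sumIID2 p k t * c ^ t.1 * t.2) := fun t => by ring
  have hassoc : ∀ q : PMF (ℕ × ℕ), pgfMulSnd q c = ∑' w, q w * (c ^ w.1 * w.2) :=
    fun q => by simp only [pgfMulSnd, mul_assoc]
  rw [hassoc, tsum_sumIID2_succ_mul]
  simp only [hinner, hsplit, ENNReal.tsum_add, ENNReal.tsum_mul_left]
  rw [← pgf, ← pgfMulSnd, pgf_sumIID2]

theorem pgfMulSnd_sumIID2 (k : ℕ) :
    pgfMulSnd (sumIID2 p k) c = k * pgfMulSnd p c * pgf p c ^ (k - 1) := by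
  induction k with
  | zero =>
    rw [pgfMulSnd, tsum_eq_single (0, 0) fun w hw => by simp [sumIID2, hw]]
    simp
  | succ k ih =>
    rw [pgfMulSnd_sumIID2_succ, ih]
    cases k with
    | zero => simp
    | succ j => push_cast; ring

theorem pgf_mono : Monotone (pgf p) := fun _ _ h =>
  ENNReal.tsum_le_tsum fun _ => mul_le_mul_right (pow_le_pow_left₀ (by simp) h _) _

theorem pgfMulSnd_mono : Monotone (pgfMulSnd p) := fun _ _ h =>
  ENNReal.tsum_le_tsum fun _ =>
    mul_le_mul_left (mul_le_mul_right (pow_le_pow_left₀ (by simp) h _) _) _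

theorem mul_pgfMulSnd_map_pred_add (q : PMF (ℕ × ℕ)) :
    c * pgfMulSnd (q.map fun z => if z.1 = 0 then (0, 0) else (z.1 - 1, z.2)) c + pgfMulSnd q 0
      = pgfMulSnd q c := by
  simp only [pgfMulSnd, mul_assoc, PMF.tsum_map_mul, ← ENNReal.tsum_mul_left,
    ← ENNReal.tsum_add]
  refine tsum_congr fun w => ?_
  rcases w with ⟨_ | y, N⟩
  · simp
  · simp only [Nat.add_sub_cancel, pow_succ, Nat.succ_ne_zero, if_false, mul_zero, zero_mul,
      add_zero]
    ring

theorem mul_pgfMulSnd_jointStep_add (m : ℕ) :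
    c * pgfMulSnd (jointStep m p) c + m * pgfMulSnd p 0 * pgf p 0 ^ (m - 1)
      = m * pgfMulSnd p c * pgf p c ^ (m - 1) := by
  rw [← pgfMulSnd_sumIID2, ← pgfMulSnd_sumIID2, jointStep, mul_pgfMulSnd_map_pred_add]

theorem toReal_pgfMulSnd_jointStep (m : ℕ) (hc₀ : c ≠ 0) (hc : c ≠ ∞)
    (hI : pgfMulSnd p c ≠ ∞) (hG : pgf p c ≠ ∞) :
    (pgfMulSnd (jointStep m p) c).toReal
      = m / c.toReal * (pgfMulSnd p c).toReal * (pgf p c).toReal ^ (m - 1)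
        - m / c.toReal * (pgfMulSnd p 0).toReal * (pgf p 0).toReal ^ (m - 1) := by
  have hI₀ : pgfMulSnd p 0 ≠ ∞ := ne_top_of_le_ne_top hI (pgfMulSnd_mono p bot_le)
  have hG₀ : pgf p 0 ≠ ∞ := ne_top_of_le_ne_top hG (pgf_mono p bot_le)
  have hstep := mul_pgfMulSnd_jointStep_add p c m
  have hrhs : (m : ℝ≥0∞) * pgfMulSnd p c * pgf p c ^ (m - 1) ≠ ∞ := by finiteness
  have hleft : c * pgfMulSnd (jointStep m p) c ≠ ∞ :=
    ne_top_of_le_ne_top hrhs (hstep ▸ le_self_add)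
  have hreal := congrArg ENNReal.toReal hstep
  rw [ENNReal.toReal_add hleft (by finiteness)] at hreal
  simp only [ENNReal.toReal_mul, ENNReal.toReal_pow, ENNReal.toReal_natCast] at hreal
  have hcr : c.toReal ≠ 0 := ENNReal.toReal_ne_zero.2 ⟨hc₀, hc⟩
  field_simp
  linarith

end GeneratingFunctions

section RealSeries

variable (p : PMF (ℕ × ℕ)) {s : ℝ}

attribute [local simp] PMF.apply_ne_top

theorem toReal_pgf_ofReal (hs : 0 ≤ s) :
    (pgf p (ENNReal.ofReal s)).toReal = ∑' z : ℕ × ℕ, (p z).toReal * s ^ z.1 := by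
  rw [pgf, ENNReal.tsum_toReal_eq fun _ => by simp [ENNReal.mul_eq_top]]
  simp [ENNReal.toReal_ofReal hs]

theorem toReal_pgfMulSnd_ofReal (hs : 0 ≤ s) :
    (pgfMulSnd p (ENNReal.ofReal s)).toReal = ∑' z : ℕ × ℕ, (p z).toReal * s ^ z.1 * z.2 := by
  rw [pgfMulSnd, ENNReal.tsum_toReal_eq fun _ => by simp [ENNReal.mul_eq_top]]
  simp [ENNReal.toReal_ofReal hs]

theorem toReal_pgf_zero :
    (pgf p 0).toReal = ∑' z : ℕ × ℕ, if z.1 = 0 then (p z).toReal else 0 := by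
  rw [pgf, ENNReal.tsum_toReal_eq fun _ => by simp [ENNReal.mul_eq_top]]
  refine tsum_congr fun z => ?_
  rcases z with ⟨_ | y, N⟩ <;> simp

theorem toReal_pgfMulSnd_zero :
    (pgfMulSnd p 0).toReal = ∑' z : ℕ × ℕ, if z.1 = 0 then (p z).toReal * z.2 else 0 := by
  rw [pgfMulSnd, ENNReal.tsum_toReal_eq fun _ => by simp [ENNReal.mul_eq_top]]
  refine tsum_congr fun z => ?_
  rcases z with ⟨_ | y, N⟩ <;> simp

theorem pgf_ofReal_ne_top (hs : 0 ≤ s)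
    (h : Summable fun z : ℕ × ℕ => (p z).toReal * s ^ z.1) : pgf p (ENNReal.ofReal s) ≠ ∞ :=
  ENNReal.tsum_ne_top_of_summable_toReal (fun _ => by simp [ENNReal.mul_eq_top])
    (by simpa [ENNReal.toReal_ofReal hs])

theorem pgfMulSnd_ofReal_ne_top (hs : 0 ≤ s)
    (h : Summable fun z : ℕ × ℕ => (p z).toReal * s ^ z.1 * z.2) :
    pgfMulSnd p (ENNReal.ofReal s) ≠ ∞ :=
  ENNReal.tsum_ne_top_of_summable_toReal (fun _ => by simp [ENNReal.mul_eq_top])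
    (by simpa [ENNReal.toReal_ofReal hs])

end RealSeries

theorem stmt16_general (m : ℕ) (P : ℕ → PMF (ℕ × ℕ))
    (hP : ∀ n, P (n+1) = jointStep m (P n)) (n : ℕ) (s : ℝ) (hs : 0 < s)
    (hI : Summable fun z : ℕ × ℕ => ((P n) z).toReal * s ^ z.1 * (z.2 : ℝ))
    (hG : Summable fun z : ℕ × ℕ => ((P n) z).toReal * s ^ z.1) :
    (∑' z : ℕ × ℕ, ((P (n+1)) z).toReal * s ^ z.1 * (z.2 : ℝ))
      = ((m : ℝ) / s) * (∑' z : ℕ × ℕ, ((P n) z).toReal * s ^ z.1 * (z.2 : ℝ))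
          * (∑' z : ℕ × ℕ, ((P n) z).toReal * s ^ z.1) ^ (m - 1)
        - ((m : ℝ) / s)
          * (∑' z : ℕ × ℕ, if z.1 = 0 then ((P n) z).toReal * (z.2 : ℝ) else 0)
          * (∑' z : ℕ × ℕ, if z.1 = 0 then ((P n) z).toReal else 0) ^ (m - 1) := by
  rw [hP n, ← toReal_pgfMulSnd_ofReal _ hs.le,
    toReal_pgfMulSnd_jointStep _ _ m (ENNReal.ofReal_pos.2 hs).ne' ENNReal.ofReal_ne_top
      (pgfMulSnd_ofReal_ne_top _ hs.le hI) (pgf_ofReal_ne_top _ hs.le hG),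
    ENNReal.toReal_ofReal hs.le, toReal_pgfMulSnd_ofReal _ hs.le, toReal_pgf_ofReal _ hs.le,
    toReal_pgfMulSnd_zero, toReal_pgf_zero]

theorem stmt16 (m : ℕ) (hm : 2 ≤ m) (P : ℕ → PMF (ℕ × ℕ))
    (hP : ∀ n, P (n+1) = jointStep m (P n)) (n : ℕ) (s : ℝ) (hs : 0 < s)
    (hI : Summable fun z : ℕ × ℕ => ((P n) z).toReal * s ^ z.1 * (z.2 : ℝ))
    (hG : Summable fun z : ℕ × ℕ => ((P n) z).toReal * s ^ z.1) :
    (∑' z : ℕ × ℕ, ((P (n+1)) z).toReal * s ^ z.1 * (z.2 : ℝ))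
      = ((m : ℝ) / s) * (∑' z : ℕ × ℕ, ((P n) z).toReal * s ^ z.1 * (z.2 : ℝ))
          * (∑' z : ℕ × ℕ, ((P n) z).toReal * s ^ z.1) ^ (m - 1)
        - ((m : ℝ) / s)
          * (∑' z : ℕ × ℕ, if z.1 = 0 then ((P n) z).toReal * (z.2 : ℝ) else 0)
          * (∑' z : ℕ × ℕ, if z.1 = 0 then ((P n) z).toReal else 0) ^ (m - 1) :=
  stmt16_general m P hP n s hs hI hG
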